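/- Under the continuous-time weighted-average consensus dynamics ẋ_i(t) = (1/w_i)·Σ_{j ∈ N_i} a_ij(t)·(x_j(t) − x_i(t)), with positive node weights w_i and symmetric time-varying coupling weights uniformly bounded above and below by positive constants on every edge, every node's state converges as t → ∞ to the weighted average of the initial states: lim_{t→∞} x_i(t) = (Σ_{j=1}^n w_j x_j(0)) / (Σ_{j=1}^n w_j) for every node i. -/

import Mathlib

/-!
Symmetric couplings make `∑ i, w i * x t i` a conserved quantity, so `x t - c`, with `c` the
weighted average of `x 0`, has weighted mean zero for all time. The energy
`V t = ∑ i, w i * (x t i - c) ^ 2` then satisfies `V' = -∑_{i ∼ j} a i j t * (x t j - x t i) ^ 2`,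
and the Poincaré inequality of the connected graph on weighted-mean-zero vectors (its constant
is positive by compactness of the unit sphere) gives `V' ≤ -δ λ V`. By Grönwall, `V` decays
exponentially, and `V` controls every `(x t i - c) ^ 2`.
-/

open Filter Topology Finset

theorem exists_pos_mul_norm_sq_le {E : Type*} [NormedAddCommGroup E] [NormedSpace ℝ E]
    [FiniteDimensional ℝ E] (S : Submodule ℝ E) {Q : E → ℝ} (hQ : Continuous Q)
    (hsmul : ∀ (c : ℝ) v, Q (c • v) = c ^ 2 * Q v) (hpos : ∀ v ∈ S, v ≠ 0 → 0 < Q v) :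
    ∃ m > 0, ∀ v ∈ S, m * ‖v‖ ^ 2 ≤ Q v := by
  have hQ0 : Q 0 = 0 := by simpa using hsmul 0 0
  set K := (S : Set E) ∩ Metric.sphere 0 1
  have hK : IsCompact K :=
    (isCompact_sphere 0 1).inter_left (Submodule.closed_of_finiteDimensional S)
  have hnormalize : ∀ v ∈ S, v ≠ 0 → ‖v‖⁻¹ • v ∈ K := fun v hv hv0 =>
    ⟨S.smul_mem _ hv, by simp [norm_smul, hv0]⟩
  rcases K.eq_empty_or_nonempty with hKe | hKne
  · refine ⟨1, one_pos, fun v hv => ?_⟩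
    obtain rfl : v = 0 := by
      by_contra hv0
      simpa [hKe] using hnormalize v hv hv0
    simp [hQ0]
  obtain ⟨u, hu, hmin⟩ := hK.exists_isMinOn hKne hQ.continuousOn
  refine ⟨Q u, hpos u hu.1 (by rintro rfl; simpa using hu.2), fun v hv => ?_⟩
  rcases eq_or_ne v 0 with rfl | hv0
  · simp [hQ0]
  have hQv : Q v = ‖v‖ ^ 2 * Q (‖v‖⁻¹ • v) := by
    rw [← hsmul, smul_smul, mul_inv_cancel₀ (norm_ne_zero_iff.2 hv0), one_smul]
  rw [hQv, mul_comm]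
  exact mul_le_mul_of_nonneg_left (hmin (hnormalize v hv hv0)) (by positivity)

theorem le_mul_exp_of_hasDerivAt_le_mul {f f' : ℝ → ℝ} {K a : ℝ}
    (hf : ∀ t, a ≤ t → HasDerivAt f (f' t) t) (hle : ∀ t, a ≤ t → f' t ≤ K * f t)
    {t : ℝ} (ht : a ≤ t) : f t ≤ f a * Real.exp (K * (t - a)) := by
  have := le_gronwallBound_of_liminf_deriv_right_le (f := f) (f' := f') (δ := f a) (ε := 0)
    (b := t) (fun s hs => (hf s hs.1).continuousAt.continuousWithinAt)
    (fun s hs r hr => by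
      simpa [slope_def_field, div_eq_inv_mul] using
        (hf s hs.1).hasDerivWithinAt.liminf_right_slope_le hr)
    le_rfl (fun s hs => by simpa using hle s hs.1) t ⟨ht, le_rfl⟩
  rwa [gronwallBound_ε0] at this

theorem tendsto_zero_of_hasDerivAt_le_neg_mul {f f' : ℝ → ℝ} {k a : ℝ} (hk : 0 < k)
    (hf : ∀ t, a ≤ t → HasDerivAt f (f' t) t) (hle : ∀ t, a ≤ t → f' t ≤ -k * f t)
    (hf0 : ∀ t, 0 ≤ f t) : Tendsto f atTop (𝓝 0) := by
  have hexp : Tendsto (fun t => f a * Real.exp (-k * (t - a))) atTop (𝓝 0) := by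
    simpa [sub_eq_add_neg] using (Real.tendsto_exp_atBot.comp
      ((tendsto_atTop_add_const_right _ (-a) tendsto_id).const_mul_atTop_of_neg
        (neg_neg_of_pos hk))).const_mul (f a)
  exact squeeze_zero' (.of_forall hf0)
    (eventually_atTop.2 ⟨a, fun t ht => le_mul_exp_of_hasDerivAt_le_mul hf hle ht⟩) hexp

theorem tendsto_of_sum_mul_sub_sq_tendsto_zero {ι α : Type*} [Fintype ι] {l : Filter α}
    {w : ι → ℝ} (hw : ∀ i, 0 < w i) {y : α → ι → ℝ} {c : ℝ}
    (h : Tendsto (fun t => ∑ i, w i * (y t i - c) ^ 2) l (𝓝 0)) (i : ι) :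
    Tendsto (fun t => y t i) l (𝓝 c) := by
  have hsq : Tendsto (fun t => (y t i - c) ^ 2) l (𝓝 0) := by
    refine squeeze_zero (fun t => sq_nonneg _) (fun t => ?_) (by simpa using h.div_const (w i))
    rw [le_div_iff₀ (hw i), mul_comm]
    exact single_le_sum (f := fun j => w j * (y t j - c) ^ 2)
      (fun j _ => mul_nonneg (hw j).le (sq_nonneg _)) (mem_univ i)
  rw [tendsto_iff_norm_sub_tendsto_zero]
  simpa [Real.sqrt_sq_eq_abs] using hsq.sqrt

namespace SimpleGraph

variable {V : Type*} [Fintype V] (G : SimpleGraph V) [DecidableRel G.Adj]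

theorem sum_sum_neighborFinset_comm {M : Type*} [AddCommMonoid M] (f : V → V → M) :
    ∑ i, ∑ j ∈ G.neighborFinset i, f i j = ∑ i, ∑ j ∈ G.neighborFinset i, f j i := by
  simp only [neighborFinset_eq_filter, sum_filter]
  rw [sum_comm]
  exact sum_congr rfl fun i _ => sum_congr rfl fun j _ => if_congr (G.adj_comm _ _) rfl rfl

theorem sum_sum_neighborFinset_eq_zero {f : V → V → ℝ} (hf : ∀ i j, f j i = -f i j) :
    ∑ i, ∑ j ∈ G.neighborFinset i, f i j = 0 := by
  have hneg : ∑ i, ∑ j ∈ G.neighborFinset i, f j i = -∑ i, ∑ j ∈ G.neighborFinset i, f i j := by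
    simp only [← sum_neg_distrib]
    exact sum_congr rfl fun i _ => sum_congr rfl fun j _ => hf i j
  linarith [G.sum_sum_neighborFinset_comm f]

theorem sum_sum_neighborFinset_mul_sub_eq_zero {A : V → V → ℝ} (hA : ∀ i j, A i j = A j i)
    (v : V → ℝ) : ∑ i, ∑ j ∈ G.neighborFinset i, A i j * (v j - v i) = 0 :=
  G.sum_sum_neighborFinset_eq_zero fun i j => by rw [hA]; ring

theorem sum_mul_sum_neighborFinset_mul_sub {A : V → V → ℝ} (hA : ∀ i j, A i j = A j i)
    (v : V → ℝ) (c : ℝ) :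
    ∑ i, 2 * (v i - c) * ∑ j ∈ G.neighborFinset i, A i j * (v j - v i) =
      -∑ i, ∑ j ∈ G.neighborFinset i, A i j * (v j - v i) ^ 2 := by
  have h := G.sum_sum_neighborFinset_eq_zero
    (f := fun i j => A i j * (v j - v i) * (v i + v j - 2 * c)) fun i j => by rw [hA]; ring
  rw [eq_neg_iff_add_eq_zero, ← sum_add_distrib, ← h]
  refine sum_congr rfl fun i _ => ?_
  rw [mul_sum, ← sum_add_distrib]
  exact sum_congr rfl fun j _ => by ring

variable {G}

theorem Preconnected.apply_eq_of_sum_sum_neighborFinset_sq_eq_zero (hG : G.Preconnected)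
    {v : V → ℝ} (h : ∑ i, ∑ j ∈ G.neighborFinset i, (v j - v i) ^ 2 = 0) (i j : V) :
    v i = v j := by
  have hadj : ∀ i j, G.Adj i j → v i = v j := fun i j hij => by
    rw [sum_eq_zero_iff_of_nonneg fun i _ => sum_nonneg fun j _ => sq_nonneg _] at h
    have := (sum_eq_zero_iff_of_nonneg fun j _ => sq_nonneg _).1 (h i (mem_univ i)) j
      ((G.mem_neighborFinset i j).2 hij)
    linarith [pow_eq_zero_iff (n := 2) two_ne_zero |>.1 this]
  obtain ⟨p⟩ := hG i j
  induction p with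
  | nil => rfl
  | cons hij _ ih => exact (hadj _ _ hij).trans ih

theorem Connected.sum_sum_neighborFinset_sq_pos (hG : G.Connected) {w : V → ℝ}
    (hw : ∀ i, 0 < w i) {v : V → ℝ} (hv : ∑ i, w i * v i = 0) (hv0 : v ≠ 0) :
    0 < ∑ i, ∑ j ∈ G.neighborFinset i, (v j - v i) ^ 2 := by
  refine (sum_nonneg fun i _ => sum_nonneg fun j _ => sq_nonneg _).lt_of_ne' fun hQ => hv0 ?_
  obtain ⟨i₀⟩ := hG.nonempty
  have hconst : v = fun _ => v i₀ :=
    funext fun i => hG.preconnected.apply_eq_of_sum_sum_neighborFinset_sq_eq_zero hQ i i₀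
  have hW : 0 < ∑ i, w i := sum_pos (fun i _ => hw i) ⟨i₀, mem_univ i₀⟩
  have : (∑ i, w i) * v i₀ = 0 := by rw [sum_mul, ← hv, hconst]
  rw [hconst, (mul_eq_zero.1 this).resolve_left hW.ne']
  rfl

theorem Connected.exists_poincare_inequality (hG : G.Connected) {w : V → ℝ}
    (hw : ∀ i, 0 < w i) :
    ∃ lam > 0, ∀ v : V → ℝ, ∑ i, w i * v i = 0 →
      lam * ∑ i, w i * v i ^ 2 ≤ ∑ i, ∑ j ∈ G.neighborFinset i, (v j - v i) ^ 2 := by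
  let S : Submodule ℝ (V → ℝ) := LinearMap.ker (∑ i, w i • LinearMap.proj i : (V → ℝ) →ₗ[ℝ] ℝ)
  have hS : ∀ v, v ∈ S ↔ ∑ i, w i * v i = 0 := fun v => by simp [S]
  obtain ⟨m, hm, hcoer⟩ := exists_pos_mul_norm_sq_le S
    (Q := fun v => ∑ i, ∑ j ∈ G.neighborFinset i, (v j - v i) ^ 2) (by fun_prop)
    (fun c v => by
      simp only [Pi.smul_apply, smul_eq_mul, mul_sum]
      exact sum_congr rfl fun i _ => sum_congr rfl fun j _ => by ring)
    (fun v hv hv0 => hG.sum_sum_neighborFinset_sq_pos hw ((hS v).1 hv) hv0)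
  have hW : 0 < ∑ i, w i := sum_pos (fun i _ => hw i) (@univ_nonempty _ _ hG.nonempty)
  refine ⟨m / ∑ i, w i, div_pos hm hW, fun v hv => ?_⟩
  have hle : ∑ i, w i * v i ^ 2 ≤ (∑ i, w i) * ‖v‖ ^ 2 := by
    rw [sum_mul]
    refine sum_le_sum fun i _ => mul_le_mul_of_nonneg_left ?_ (hw i).le
    exact sq_le_sq.2 (by simpa using norm_le_pi_norm v i)
  calc m / (∑ i, w i) * ∑ i, w i * v i ^ 2 ≤ m / (∑ i, w i) * ((∑ i, w i) * ‖v‖ ^ 2) := by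
        gcongr
    _ = m * ‖v‖ ^ 2 := by field_simp
    _ ≤ _ := hcoer v ((hS v).2 hv)

variable (G) in
def IsConsensusTrajectory (w : V → ℝ) (a : V → V → ℝ → ℝ) (x : ℝ → V → ℝ) : Prop :=
  ∀ i, ∀ t, 0 ≤ t → HasDerivAt (fun s => x s i)
    ((1 / w i) * ∑ j ∈ G.neighborFinset i, a i j t * (x t j - x t i)) t

namespace IsConsensusTrajectory

variable {w : V → ℝ} {a : V → V → ℝ → ℝ} {x : ℝ → V → ℝ}

theorem sum_mul_eq (hx : G.IsConsensusTrajectory w a x) (hw : ∀ i, w i ≠ 0)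
    (ha : ∀ i j t, a i j t = a j i t) {t : ℝ} (ht : 0 ≤ t) :
    ∑ i, w i * x t i = ∑ i, w i * x 0 i := by
  have hderiv : ∀ s, 0 ≤ s → HasDerivAt (fun s => ∑ i, w i * x s i) 0 s := fun s hs => by
    refine (HasDerivAt.fun_sum fun i _ => (hx i s hs).const_mul (w i)).congr_deriv ?_
    rw [← G.sum_sum_neighborFinset_mul_sub_eq_zero (fun i j => ha i j s) (x s)]
    exact sum_congr rfl fun i _ => by field_simp [hw i]
  exact constant_of_has_deriv_right_zero
    (fun s hs => (hderiv s hs.1).continuousAt.continuousWithinAt)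
    (fun s hs => (hderiv s hs.1).hasDerivWithinAt) t ⟨ht, le_rfl⟩

theorem hasDerivAt_sum_mul_sub_sq (hx : G.IsConsensusTrajectory w a x) (hw : ∀ i, w i ≠ 0)
    (ha : ∀ i j t, a i j t = a j i t) (c : ℝ) {t : ℝ} (ht : 0 ≤ t) :
    HasDerivAt (fun s => ∑ i, w i * (x s i - c) ^ 2)
      (-∑ i, ∑ j ∈ G.neighborFinset i, a i j t * (x t j - x t i) ^ 2) t := by
  refine (HasDerivAt.fun_sum fun i _ =>
    (((hx i t ht).sub_const c).pow 2).const_mul (w i)).congr_deriv ?_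
  rw [← G.sum_mul_sum_neighborFinset_mul_sub (fun i j => ha i j t) (x t) c]
  exact sum_congr rfl fun i _ => by field_simp [hw i]; ring

end IsConsensusTrajectory

end SimpleGraph

theorem ct_weighted_average_consensus_general
    (n : ℕ)
    (G : SimpleGraph (Fin n)) [DecidableRel G.Adj]
    (hconn : G.Connected)
    (w : Fin n → ℝ) (hw : ∀ i, 0 < w i)
    (x : ℝ → Fin n → ℝ)
    (a : Fin n → Fin n → ℝ → ℝ)
    (ha_symm : ∀ i j t, a i j t = a j i t)
    (δ abar : ℝ) (hδ : 0 < δ)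
    (hbound : ∀ i j, G.Adj i j → ∀ t : ℝ, 0 ≤ t →
      δ ≤ a i j t ∧ a i j t ≤ abar)
    (hdyn : ∀ i, ∀ t : ℝ, 0 ≤ t →
      HasDerivAt (fun s => x s i)
        ((1 / w i) * ∑ j ∈ G.neighborFinset i, a i j t * (x t j - x t i)) t) :
    ∀ i, Tendsto (fun t => x t i) atTop
      (𝓝 ((∑ j, w j * x 0 j) / (∑ j, w j))) := by
  have hx : G.IsConsensusTrajectory w a x := hdyn
  have hw₀ : ∀ i, w i ≠ 0 := fun i => (hw i).ne'
  set c := (∑ j, w j * x 0 j) / ∑ j, w j with hc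
  have hW : 0 < ∑ j, w j := sum_pos (fun i _ => hw i) (@univ_nonempty _ _ hconn.nonempty)
  have hmean : ∀ t, 0 ≤ t → ∑ i, w i * (x t i - c) = 0 := fun t ht => by
    simp only [mul_sub, sum_sub_distrib, ← sum_mul, hx.sum_mul_eq hw₀ ha_symm ht, hc]
    field_simp
    ring
  obtain ⟨lam, hlam, hpoincare⟩ := hconn.exists_poincare_inequality hw
  have hdissipation : ∀ t, 0 ≤ t →
      -∑ i, ∑ j ∈ G.neighborFinset i, a i j t * (x t j - x t i) ^ 2 ≤
        -(δ * lam) * ∑ i, w i * (x t i - c) ^ 2 := fun t ht => by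
    have hgap := hpoincare (fun i => x t i - c) (hmean t ht)
    simp only [sub_sub_sub_cancel_right] at hgap
    have hδQ : δ * ∑ i, ∑ j ∈ G.neighborFinset i, (x t j - x t i) ^ 2 ≤
        ∑ i, ∑ j ∈ G.neighborFinset i, a i j t * (x t j - x t i) ^ 2 := by
      simp_rw [mul_sum]
      gcongr with i _ j hj
      exact (hbound i j ((G.mem_neighborFinset i j).1 hj) t ht).1
    linarith [mul_le_mul_of_nonneg_left hgap hδ.le]
  exact tendsto_of_sum_mul_sub_sq_tendsto_zero hw
    (tendsto_zero_of_hasDerivAt_le_neg_mul (mul_pos hδ hlam)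
      (fun t ht => hx.hasDerivAt_sum_mul_sub_sq hw₀ ha_symm c ht) hdissipation
      (fun t => sum_nonneg fun i _ => mul_nonneg (hw i).le (sq_nonneg _)))

/-- Continuous-time weighted-average consensus with positive node weights and
symmetric, uniformly bounded, time-varying coupling weights: every node's
state converges to the weighted average of the initial states. -/
theorem ct_weighted_average_consensus
    (n : ℕ) (hn : 2 ≤ n)
    (G : SimpleGraph (Fin n)) [DecidableRel G.Adj]
    (hconn : G.Connected)
    (w : Fin n → ℝ) (hw : ∀ i, 0 < w i)
    (x : ℝ → Fin n → ℝ)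
    (a : Fin n → Fin n → ℝ → ℝ)
    (ha_cont : ∀ i j, Continuous (a i j))
    (ha_symm : ∀ i j t, a i j t = a j i t)
    (δ abar : ℝ) (hδ : 0 < δ) (hδa : δ ≤ abar)
    (hbound : ∀ i j, G.Adj i j → ∀ t : ℝ, 0 ≤ t →
      δ ≤ a i j t ∧ a i j t ≤ abar)
    (hdyn : ∀ i, ∀ t : ℝ, 0 ≤ t →
      HasDerivAt (fun s => x s i)
        ((1 / w i) * ∑ j ∈ G.neighborFinset i, a i j t * (x t j - x t i)) t) :
    ∀ i, Tendsto (fun t => x t i) atTop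
      (𝓝 ((∑ j, w j * x 0 j) / (∑ j, w j))) :=
  ct_weighted_average_consensus_general n G hconn w hw x a ha_symm δ abar hδ hbound hdyn
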